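/- arXiv:1211.2541 — 2 statements merged into one kernel-verified Lean document; each statement's English description precedes it below -/
import Mathlib

section
/- Let H be a non-negative self-adjoint operator on a Hilbert space ℋ. If there exists a sequence ψ_n in the form domain D(H^{1/2}) with ‖ψ_n‖ = 1 for all n and ‖(H+1)^{-1/2}(H−λ)ψ_n‖ → 0 as n → ∞, then λ ∈ σ(H). -/
/-!
If `λ ∉ σ(H)`, then `H - λ` is invertible, and so is `(H + 1)^{-1/2}`, because `√((t + 1)⁻¹)`
does not vanish on `σ(H) ⊆ [0, ∞)`. Their product is then bounded below, which is incompatible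
with the product sending a sequence of unit vectors to `0`.
-/

open Filter Topology

lemma isUnit_cfc_sqrt_inv_add_one {A : Type*} [CStarAlgebra A] [PartialOrder A]
    [StarOrderedRing A] {a : A} (ha : 0 ≤ a) :
    IsUnit (cfc (fun t : ℝ => √((t + 1)⁻¹)) a) := by
  have hpos : ∀ t ∈ spectrum ℝ a, 0 < t + 1 := fun t ht => by
    linarith [spectrum_nonneg_of_nonneg ha ht]
  have hcont : ContinuousOn (fun t : ℝ => √((t + 1)⁻¹)) (spectrum ℝ a) := fun t ht =>
    (Real.continuous_sqrt.continuousAt.comp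
      ((continuous_add_const 1).continuousAt.inv₀ (hpos t ht).ne')).continuousWithinAt
  exact (isUnit_cfc_iff _ a hcont).2 fun t ht => (Real.sqrt_pos.2 (inv_pos.2 (hpos t ht))).ne'

lemma IsUnit.not_tendsto_norm_apply_zero {𝕜 E ι : Type*} [NontriviallyNormedField 𝕜]
    [NormedAddCommGroup E] [NormedSpace 𝕜 E] {T : E →L[𝕜] E} (hT : IsUnit T)
    {l : Filter ι} [l.NeBot] {x : ι → E} (hx : ∀ i, ‖x i‖ = 1) :
    ¬ Tendsto (fun i => ‖T (x i)‖) l (𝓝 0) := by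
  obtain ⟨u, rfl⟩ := hT
  intro h
  have hle : ∀ i, ‖x i‖ ≤ ‖(↑u⁻¹ : E →L[𝕜] E)‖ * ‖(u : E →L[𝕜] E) (x i)‖ := fun i => by
    simpa only [← mul_apply_eq_comp, Units.inv_mul, one_apply_eq_self] using
      (↑u⁻¹ : E →L[𝕜] E).le_opNorm ((u : E →L[𝕜] E) (x i))
  have : Tendsto (fun i => ‖x i‖) l (𝓝 0) :=
    squeeze_zero (fun _ => norm_nonneg _) hle (by simpa using h.const_mul _)
  simp only [hx] at this
  exact one_ne_zero (tendsto_nhds_unique tendsto_const_nhds this)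

/-- Let `H` be a non-negative self-adjoint operator on a Hilbert space `ℋ`.
If there exists a sequence `ψ n` (in the form domain) with `‖ψ n‖ = 1` for all `n` and
`‖(H+1)^{-1/2}(H-λ)ψ n‖ → 0` as `n → ∞` (convergence in the dual norm `‖·‖₋₁`),
then `λ ∈ σ(H)`. -/
theorem stmt1 {ℋ : Type*} [NormedAddCommGroup ℋ] [InnerProductSpace ℂ ℋ] [CompleteSpace ℋ]
    (H : ℋ →L[ℂ] ℋ) (hH : H.IsPositive) (lam : ℝ) (ψ : ℕ → ℋ)
    (hnorm : ∀ n, ‖ψ n‖ = 1)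
    (hconv : Tendsto
      (fun n => ‖cfc (fun t : ℝ => Real.sqrt ((t + 1)⁻¹)) H (H (ψ n) - (lam : ℂ) • ψ n)‖)
      atTop (nhds 0)) :
    lam ∈ spectrum ℝ H := by
  by_contra hlam
  have hH₀ : 0 ≤ H := (ContinuousLinearMap.nonneg_iff_isPositive H).2 hH
  have hunit : IsUnit (cfc (fun t : ℝ => √((t + 1)⁻¹)) H * (algebraMap ℝ _ lam - H)) :=
    (isUnit_cfc_sqrt_inv_add_one hH₀).mul (spectrum.notMem_iff.mp hlam)
  refine hunit.not_tendsto_norm_apply_zero (l := atTop) hnorm ?_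
  convert hconv using 2 with n
  rw [mul_apply_eq_comp, ← norm_neg, ← map_neg]
  congr 2
  simp [Algebra.algebraMap_eq_smul_one]
end

section
/- Let H be a non-negative self-adjoint operator on a Hilbert space ℋ. If there exists a sequence ψ_n in the form domain D(H^{1/2}) with ‖ψ_n‖ = 1, with ‖(H+1)^{-1/2}(H−λ)ψ_n‖ → 0, and with ψ_n converging weakly to 0 in ℋ, then λ belongs to the essential spectrum of H. -/
/-! Since `(H + 1)^{1/2}` is bounded, `(H - λ) ψₙ → 0` in norm. If `λ ∉ σ(H)`, then
`ψₙ = (H - λ)⁻¹ (H - λ) ψₙ → 0`. If `λ` is an isolated eigenvalue of finite multiplicity, the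
spectral projection `P` onto `ker (H - λ)` has finite rank, so weak convergence gives `P ψₙ → 0`,
while `(1 - P) ψₙ = R (H - λ) ψₙ → 0` for the reduced resolvent `R`. Either way `ψₙ → 0`,
contradicting `‖ψₙ‖ = 1`. -/

open Filter

/-- The essential spectrum of a (bounded) self-adjoint operator: points of the spectrum that
are either accumulation points of the spectrum or eigenvalues of infinite multiplicity. -/
def essSpectrum {ℋ : Type*} [NormedAddCommGroup ℋ] [InnerProductSpace ℂ ℋ] [CompleteSpace ℋ]
    (H : ℋ →L[ℂ] ℋ) : Set ℝ :=
  {lam | lam ∈ spectrum ℝ H ∧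
    (AccPt lam (Filter.principal (spectrum ℝ H)) ∨
      ¬ FiniteDimensional ℂ
        (LinearMap.ker (H - (lam : ℂ) • (1 : ℋ →L[ℂ] ℋ)).toLinearMap))}

open Topology
open scoped InnerProductSpace

lemma continuousOn_of_not_accPt {X Y : Type*} [TopologicalSpace X] [TopologicalSpace Y]
    {f : X → Y} {s : Set X} {x : X} (hx : ¬ AccPt x (𝓟 s))
    (hf : ∀ y ∈ s, y ≠ x → ContinuousAt f y) : ContinuousOn f s := by
  intro y hy
  rcases eq_or_ne y x with rfl | hyx
  · rw [accPt_principal_iff_nhdsWithin, not_neBot] at hx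
    rw [← continuousWithinAt_sdiff_self, ContinuousWithinAt, hx]
    exact tendsto_bot
  · exact (hf y hy hyx).continuousWithinAt

section IsolatedPoint

variable {A : Type*} [Ring A] [StarRing A] [Algebra ℝ A] [TopologicalSpace A]
  [ContinuousFunctionalCalculus ℝ A IsSelfAdjoint]

/-- `P = 1_{lam}(a)` and `R = (a - lam)⁻¹` off `lam` both come from `t ↦ (t - lam)⁻¹`, which is
`0` at `lam` by Lean's convention and continuous on the spectrum since `lam` is isolated. -/
lemma IsSelfAdjoint.exists_mul_sub_algebraMap_eq_one_sub {a : A} (ha : IsSelfAdjoint a) {lam : ℝ}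
    (hlam : ¬ AccPt lam (𝓟 (spectrum ℝ a))) :
    ∃ P R : A, IsSelfAdjoint P ∧ (a - algebraMap ℝ A lam) * P = 0 ∧
      R * (a - algebraMap ℝ A lam) = 1 - P := by
  have hr : ContinuousOn (fun t : ℝ => (t - lam)⁻¹) (spectrum ℝ a) :=
    continuousOn_of_not_accPt hlam fun t _ ht =>
      (continuousAt_id.sub continuousAt_const).inv₀ (sub_ne_zero.mpr ht)
  have hT : cfc (fun t : ℝ => t - lam) a = a - algebraMap ℝ A lam := by
    rw [cfc_sub .., cfc_id' .., cfc_const ..]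
  refine ⟨cfc (fun t => 1 - (t - lam)⁻¹ * (t - lam)) a, cfc (fun t => (t - lam)⁻¹) a,
    cfc_predicate _ _, ?_, ?_⟩
  · rw [← hT, ← cfc_mul .., ← cfc_zero ℝ a]
    refine cfc_congr fun t _ => ?_
    rcases eq_or_ne (t - lam) 0 with h | h <;> simp [h]
  · rw [← hT, ← cfc_mul .., cfc_sub .., cfc_const_one .., sub_sub_cancel]

end IsolatedPoint

lemma ContinuousLinearMap.tendsto_zero_of_isUnit {R M ι : Type*} [Semiring R]
    [TopologicalSpace M] [AddCommMonoid M] [Module R M] {T : M →L[R] M} (hT : IsUnit T)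
    {l : Filter ι} {u : ι → M} (h : Tendsto (fun i => T (u i)) l (𝓝 0)) :
    Tendsto u l (𝓝 0) := by
  rw [(ContinuousLinearMap.isHomeomorph_of_isUnit hT).isInducing.tendsto_nhds_iff, map_zero]
  exact h

section WeakConvergence

variable {𝕜 E ι : Type*} [RCLike 𝕜] [NormedAddCommGroup E] [InnerProductSpace 𝕜 E]
  {l : Filter ι}

lemma Submodule.tendsto_zero_of_forall_inner_tendsto_zero (F : Submodule 𝕜 E)
    [FiniteDimensional 𝕜 F] {u : ι → E} (hu : ∀ i, u i ∈ F)
    (h : ∀ φ : E, Tendsto (fun i => ⟪φ, u i⟫_𝕜) l (𝓝 0)) : Tendsto u l (𝓝 0) := by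
  let b := stdOrthonormalBasis 𝕜 F
  have hsum : u = fun i => ∑ j, ⟪(b j : E), u i⟫_𝕜 • (b j : E) := funext fun i => by
    simpa using (congrArg Subtype.val (b.sum_repr' ⟨u i, hu i⟩)).symm
  rw [hsum]
  simpa using tendsto_finsetSum _ fun j _ => (h (b j)).smul_const (b j : E)

lemma ContinuousLinearMap.tendsto_zero_of_weak_of_finiteDimensional_ker [CompleteSpace E]
    {T R P : E →L[𝕜] E} (hP : IsSelfAdjoint P) (hTP : T * P = 0) (hRT : R * T = 1 - P)
    [FiniteDimensional 𝕜 (LinearMap.ker T.toLinearMap)] {ψ : ι → E}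
    (hweak : ∀ φ : E, Tendsto (fun i => ⟪φ, ψ i⟫_𝕜) l (𝓝 0))
    (hT : Tendsto (fun i => T (ψ i)) l (𝓝 0)) : Tendsto ψ l (𝓝 0) := by
  have hPψ : Tendsto (fun i => P (ψ i)) l (𝓝 0) := by
    refine (LinearMap.ker T.toLinearMap).tendsto_zero_of_forall_inner_tendsto_zero
      (fun i => ?_) fun φ => ?_
    · simp [LinearMap.mem_ker, ← mul_apply_eq_comp, hTP]
    · simpa [← ContinuousLinearMap.adjoint_inner_left, hP.adjoint_eq] using hweak (P φ)
  have hRTψ : Tendsto (fun i => R (T (ψ i))) l (𝓝 0) :=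
    (R.continuous.tendsto' 0 0 (map_zero R)).comp hT
  have hsplit : ψ = fun i => P (ψ i) + R (T (ψ i)) := funext fun i => by
    rw [← mul_apply_eq_comp, hRT]
    simp
  rw [hsplit]
  simpa using hPψ.add hRTψ

end WeakConvergence

/-- Let `H` be a non-negative self-adjoint operator on a Hilbert space `ℋ`.
If there exists a sequence `ψ n` in the form domain with `‖ψ n‖ = 1`, with
`‖(H+1)^{-1/2}(H-λ)ψ n‖ → 0`, and with `ψ n` converging weakly to `0` in `ℋ`, then `λ`
belongs to the essential spectrum of `H`. -/
theorem stmt2 {ℋ : Type*} [NormedAddCommGroup ℋ] [InnerProductSpace ℂ ℋ] [CompleteSpace ℋ]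
    (H : ℋ →L[ℂ] ℋ) (hH : H.IsPositive) (lam : ℝ) (ψ : ℕ → ℋ)
    (hnorm : ∀ n, ‖ψ n‖ = 1)
    (hconv : Tendsto
      (fun n => ‖cfc (fun t : ℝ => Real.sqrt ((t + 1)⁻¹)) H (H (ψ n) - (lam : ℂ) • ψ n)‖)
      atTop (nhds 0))
    (hweak : ∀ φ : ℋ, Tendsto (fun n => (inner ℂ φ (ψ n) : ℂ)) atTop (nhds 0)) :
    lam ∈ essSpectrum H := by
  set T : ℋ →L[ℂ] ℋ := H - (lam : ℂ) • 1
  have hT : T = H - algebraMap ℝ _ lam := by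
    rw [Algebra.algebraMap_eq_smul_one, ← Complex.coe_smul]
  have hspec : ∀ t ∈ spectrum ℝ H, 0 ≤ t := fun t ht =>
    spectrum_nonneg_of_nonneg ((H.nonneg_iff_isPositive).2 hH) ht
  have hTψ : Tendsto (fun n => T (ψ n)) atTop (𝓝 0) := by
    have hcont : ContinuousOn (fun t : ℝ => √((t + 1)⁻¹)) (spectrum ℝ H) :=
      ContinuousOn.sqrt <| ContinuousOn.inv₀ (by fun_prop) fun t ht => by
        have := hspec t ht
        positivity
    refine ContinuousLinearMap.tendsto_zero_of_isUnit
      ((isUnit_cfc_iff _ H hcont hH.isSelfAdjoint).2 fun t ht => ?_) ?_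
    · exact (Real.sqrt_pos.2 (inv_pos.2 (by linarith [hspec t ht]))).ne'
    · exact tendsto_zero_iff_norm_tendsto_zero.2 (by simpa [T] using hconv)
  have hψ : ¬ Tendsto ψ atTop (𝓝 0) := fun h => by
    simpa [hnorm] using tendsto_zero_iff_norm_tendsto_zero.1 h
  refine ⟨fun hlam => hψ (ContinuousLinearMap.tendsto_zero_of_isUnit ?_ hTψ), ?_⟩
  · simpa [hT] using (spectrum.mem_resolventSet_iff.1 hlam).neg
  · by_contra! ⟨hiso, hker⟩
    obtain ⟨P, R, hP, hTP, hRT⟩ := hH.isSelfAdjoint.exists_mul_sub_algebraMap_eq_one_sub hiso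
    exact hψ (ContinuousLinearMap.tendsto_zero_of_weak_of_finiteDimensional_ker
      hP (hT ▸ hTP) (hT ▸ hRT) hweak hTψ)
end
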